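/- arXiv:2101.09268 — 5 statements merged into one kernel-verified Lean document; each statement's English description precedes it below -/
import Mathlib

section
/- Let Λ ⊆ ℝ^d be a full-rank lattice and x_1,…,x_k ∈ Λ. Let 𝒞 = { α_1 x_1 + ⋯ + α_k x_k : α_i ≥ 0 for every i } be the convex cone over the x_i, and let C = { α_1 x_1 + ⋯ + α_k x_k : 0 ≤ α_i ≤ 1 for every i }. Then C ∩ Λ is a finite set, and every element of 𝒞 ∩ Λ can be written as a finite sum of elements of C ∩ Λ; that is, C ∩ Λ generates the additive semigroup generated by 𝒞 ∩ Λ. -/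
/-!
Write each coefficient as `aᵢ = ⌊aᵢ⌋ + fract aᵢ`. The fractional part `∑ fract aᵢ • xᵢ` lies in the
parallelepiped `C`, and it lies in `Λ` because it differs from `v` by the lattice vector
`∑ ⌊aᵢ⌋ • xᵢ`; the integral part is a sum of copies of the `xᵢ ∈ C ∩ Λ`. Finiteness holds because
`C` is compact and `Λ` is a discrete, hence closed, subgroup.
-/

open Set

section Parallelepiped

variable {ι E : Type*} [Fintype ι] [AddCommGroup E] [Module ℝ E]

theorem mem_parallelepiped_self (v : ι → E) (i : ι) : v i ∈ parallelepiped v := by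
  classical
  refine (mem_parallelepiped_iff v _).2 ⟨Pi.single i 1, ⟨?_, ?_⟩, ?_⟩
  · exact Pi.single_nonneg.2 zero_le_one
  · intro j
    rcases eq_or_ne j i with rfl | h <;> simp [*]
  · simp [Pi.single_apply, ite_smul]

theorem sum_fract_smul_mem_parallelepiped (v : ι → E) (a : ι → ℝ) :
    ∑ i, Int.fract (a i) • v i ∈ parallelepiped v :=
  (mem_parallelepiped_iff v _).2
    ⟨fun i => Int.fract (a i), ⟨fun _ => Int.fract_nonneg _, fun _ => (Int.fract_lt_one _).le⟩,
      rfl⟩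

theorem isCompact_parallelepiped [TopologicalSpace E] [ContinuousAdd E] [ContinuousSMul ℝ E]
    (v : ι → E) : IsCompact (parallelepiped v) :=
  isCompact_Icc.image (by fun_prop)

theorem sum_smul_eq_sum_fract_smul_add_sum_floor_smul (v : ι → E) {a : ι → ℝ} (ha : 0 ≤ a) :
    ∑ i, a i • v i = ∑ i, Int.fract (a i) • v i + ∑ i, ⌊a i⌋₊ • v i := by
  rw [← Finset.sum_add_distrib]
  refine Finset.sum_congr rfl fun i _ => ?_
  rw [← Nat.cast_smul_eq_nsmul ℝ, ← add_smul, natCast_floor_eq_intCast_floor (ha i),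
    Int.fract_add_floor]

theorem sum_smul_mem_closure_parallelepiped_inter (S : AddSubgroup E) {v : ι → E}
    (hv : ∀ i, v i ∈ S) {a : ι → ℝ} (ha : 0 ≤ a) (hS : ∑ i, a i • v i ∈ S) :
    ∑ i, a i • v i ∈ AddSubmonoid.closure (parallelepiped v ∩ S) := by
  have hfloor : ∑ i, ⌊a i⌋₊ • v i ∈ S := S.sum_mem fun i _ => S.nsmul_mem (hv i) _
  have hfract : ∑ i, Int.fract (a i) • v i ∈ parallelepiped v ∩ S := by
    refine ⟨sum_fract_smul_mem_parallelepiped v a, ?_⟩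
    rw [eq_sub_of_add_eq (sum_smul_eq_sum_fract_smul_add_sum_floor_smul v ha).symm]
    exact S.sub_mem hS hfloor
  rw [sum_smul_eq_sum_fract_smul_add_sum_floor_smul v ha]
  refine add_mem (AddSubmonoid.subset_closure hfract) (sum_mem fun i _ => nsmul_mem ?_ _)
  exact AddSubmonoid.subset_closure ⟨mem_parallelepiped_self v i, hv i⟩

end Parallelepiped

theorem IsCompact.finite_inter_addSubgroup {G : Type*} [AddGroup G] [TopologicalSpace G]
    [IsTopologicalAddGroup G] [T2Space G] {K : Set G} (hK : IsCompact K) (S : AddSubgroup G)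
    [DiscreteTopology S] : (K ∩ S).Finite :=
  (hK.inter_right S.isClosed_of_discrete).finite <|
    isDiscrete_iff_discreteTopology.2 (DiscreteTopology.of_subset ‹_› inter_subset_right)

theorem stmt3_general (d k : ℕ) (Λ : Submodule ℤ (EuclideanSpace ℝ (Fin d)))
    [DiscreteTopology Λ]
    (x : Fin k → EuclideanSpace ℝ (Fin d)) (hx : ∀ i, x i ∈ Λ)
    (cone C : Set (EuclideanSpace ℝ (Fin d)))
    (hcone : cone = {v | ∃ a : Fin k → ℝ, (∀ i, 0 ≤ a i) ∧ v = ∑ i, a i • x i})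
    (hC : C = {v | ∃ a : Fin k → ℝ, (∀ i, 0 ≤ a i ∧ a i ≤ 1) ∧ v = ∑ i, a i • x i}) :
    (C ∩ (Λ : Set (EuclideanSpace ℝ (Fin d)))).Finite ∧
      ∀ v ∈ cone ∩ (Λ : Set (EuclideanSpace ℝ (Fin d))),
        v ∈ AddSubmonoid.closure (C ∩ (Λ : Set (EuclideanSpace ℝ (Fin d)))) := by
  have hC' : C = parallelepiped x := by
    ext v
    simp only [hC, mem_parallelepiped_iff, mem_Icc, Pi.le_def, forall_and, mem_ofPred_eq,
      Pi.zero_apply, Pi.one_apply]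
  have : DiscreteTopology Λ.toAddSubgroup := ‹_›
  subst hcone
  rw [hC']
  refine ⟨(isCompact_parallelepiped x).finite_inter_addSubgroup Λ.toAddSubgroup, ?_⟩
  rintro _ ⟨⟨a, ha, rfl⟩, hv⟩
  exact sum_smul_mem_closure_parallelepiped_inter Λ.toAddSubgroup hx ha hv

theorem stmt3 (d k : ℕ) (Λ : Submodule ℤ (EuclideanSpace ℝ (Fin d)))
    [DiscreteTopology Λ] [IsZLattice ℝ Λ]
    (x : Fin k → EuclideanSpace ℝ (Fin d)) (hx : ∀ i, x i ∈ Λ)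
    (cone C : Set (EuclideanSpace ℝ (Fin d)))
    (hcone : cone = {v | ∃ a : Fin k → ℝ, (∀ i, 0 ≤ a i) ∧ v = ∑ i, a i • x i})
    (hC : C = {v | ∃ a : Fin k → ℝ, (∀ i, 0 ≤ a i ∧ a i ≤ 1) ∧ v = ∑ i, a i • x i}) :
    (C ∩ (Λ : Set (EuclideanSpace ℝ (Fin d)))).Finite ∧
      ∀ v ∈ cone ∩ (Λ : Set (EuclideanSpace ℝ (Fin d))),
        v ∈ AddSubmonoid.closure (C ∩ (Λ : Set (EuclideanSpace ℝ (Fin d)))) :=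
  stmt3_general d k Λ x hx cone C hcone hC
end

section
/- Let A and B be nonempty compact convex subsets of ℝ^d. Then the Minkowski difference of the Minkowski sum A + B by B equals A; that is, { x ∈ ℝ^d : x + B ⊆ A + B } = A. Equivalently, a point x belongs to A if and only if x + b ∈ A + B for every b ∈ B. -/
/-! If `x ∉ A`, separate `x` from `A` by a continuous functional `f` with `f < u < f x` on `A`,
and let `b` maximise `f` on the compact set `B`. Then `x + b = a + b'` with `a ∈ A`, `b' ∈ B`
is impossible, since `f (a + b') < u + f b < f (x + b)`. -/

open Pointwise

section

variable {E : Type*} [TopologicalSpace E] [AddCommGroup E] [Module ℝ E]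
  [IsTopologicalAddGroup E] [ContinuousSMul ℝ E] [LocallyConvexSpace ℝ E]

theorem Convex.mem_of_forall_add_mem_add {A B : Set E} (hAconv : Convex ℝ A)
    (hAclosed : IsClosed A) (hBc : IsCompact B) (hBne : B.Nonempty) {x : E}
    (hx : ∀ b ∈ B, x + b ∈ A + B) : x ∈ A := by
  by_contra hxA
  obtain ⟨f, u, hfA, hux⟩ := geometric_hahn_banach_closed_point hAconv hAclosed hxA
  obtain ⟨b, hbB, hbmax⟩ := hBc.exists_isMaxOn hBne f.continuous.continuousOn
  obtain ⟨a, haA, b', hb'B, hab⟩ := hx b hbB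
  have hsum : f a + f b' = f x + f b := by rw [← map_add, ← map_add, ← hab]
  linarith [hfA a haA, show f b' ≤ f b from hbmax hb'B]

theorem Convex.setOf_forall_add_mem_add_eq {A B : Set E} (hAconv : Convex ℝ A)
    (hAclosed : IsClosed A) (hBc : IsCompact B) (hBne : B.Nonempty) :
    {x | ∀ b ∈ B, x + b ∈ A + B} = A :=
  Set.Subset.antisymm (fun _ hx => hAconv.mem_of_forall_add_mem_add hAclosed hBc hBne hx)
    fun _ hx _ hb => Set.add_mem_add hx hb

end

theorem stmt5_general (d : ℕ) (A B : Set (EuclideanSpace ℝ (Fin d)))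
    (hBne : B.Nonempty)
    (hAc : IsCompact A) (hBc : IsCompact B)
    (hAconv : Convex ℝ A) :
    {x : EuclideanSpace ℝ (Fin d) | ∀ b ∈ B, x + b ∈ A + B} = A :=
  hAconv.setOf_forall_add_mem_add_eq hAc.isClosed hBc hBne

theorem stmt5 (d : ℕ) (A B : Set (EuclideanSpace ℝ (Fin d)))
    (hAne : A.Nonempty) (hBne : B.Nonempty)
    (hAc : IsCompact A) (hBc : IsCompact B)
    (hAconv : Convex ℝ A) (hBconv : Convex ℝ B) :
    {x : EuclideanSpace ℝ (Fin d) | ∀ b ∈ B, x + b ∈ A + B} = A :=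
  stmt5_general d A B hBne hAc hBc hAconv
end

section
/- Let E be a finite-dimensional real inner product space, let v_1,…,v_k, w_1,…,w_k ∈ E, and let b ≥ 0 satisfy ‖v_i − w_i‖ ≤ b for every i. Let P be the convex hull of {v_1,…,v_k} and Q the convex hull of {w_1,…,w_k}. Then every point x ∈ P whose distance to the topological boundary of P is at least b belongs to Q; that is, { x ∈ P : dist(x, ∂P) ≥ b } ⊆ Q. -/
/-!
If `x` is at distance at least `b` from the boundary of the closed set `P`, then
`closedBall x b ⊆ P`. Moving every vertex by at most `b` gives `P ⊆ Q + closedBall 0 b`, so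
`closedBall x b ⊆ Q + closedBall 0 b`, and the ball cancels: were `x ∉ Q`, a functional `f`
separating `x` from `Q` would exceed `sup_Q f + b‖f‖` somewhere on `closedBall x b`, whereas
it is bounded by that on `Q + closedBall 0 b`.
-/

open Set Metric Pointwise

section NormedSpace

variable {E : Type*} [NormedAddCommGroup E] [NormedSpace ℝ E]

theorem ContinuousLinearMap.exists_norm_le_lt_apply (f : E →L[ℝ] ℝ) {b c : ℝ} (hb : 0 ≤ b)
    (hc : c < b * ‖f‖) : ∃ s, ‖s‖ ≤ b ∧ c < f s := by
  rcases hb.eq_or_lt with rfl | hb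
  · exact ⟨0, by simp, by simpa using hc⟩
  obtain ⟨s, hs, hcs⟩ := f.exists_lt_apply_of_lt_opNorm (r := c / b)
    (by rwa [div_lt_iff₀' hb])
  obtain ⟨s', hs', hfs'⟩ : ∃ s', ‖s'‖ < 1 ∧ c / b < f s' := by
    rcases le_total 0 (f s) with hfs | hfs
    · exact ⟨s, hs, by rwa [Real.norm_of_nonneg hfs] at hcs⟩
    · exact ⟨-s, by rwa [norm_neg], by rwa [Real.norm_of_nonpos hfs, ← map_neg] at hcs⟩
  refine ⟨b • s', ?_, ?_⟩
  · rw [norm_smul, Real.norm_of_nonneg hb.le]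
    exact mul_le_of_le_one_right hb.le hs'.le
  · rw [map_smul, smul_eq_mul, ← div_lt_iff₀' hb]
    exact hfs'

theorem mem_of_closedBall_subset_add_closedBall {Q : Set E} (hQ : Convex ℝ Q)
    (hQc : IsClosed Q) {x : E} {b : ℝ} (hb : 0 ≤ b)
    (h : closedBall x b ⊆ Q + closedBall (0 : E) b) : x ∈ Q := by
  by_contra hx
  obtain ⟨f, u, hfQ, hux⟩ := geometric_hahn_banach_closed_point hQ hQc hx
  obtain ⟨s, hs, hfs⟩ :=
    f.exists_norm_le_lt_apply hb (c := b * ‖f‖ - (f x - u)) (by linarith)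
  obtain ⟨q, hq, t, ht, hqt⟩ := h (by simpa using hs : x + s ∈ closedBall x b)
  have hft : f t ≤ b * ‖f‖ := calc
    f t ≤ ‖f‖ * ‖t‖ := (le_abs_self _).trans (f.le_opNorm t)
    _ ≤ b * ‖f‖ := by rw [mul_comm]; gcongr; simpa using ht
  have hfxs : f x + f s = f q + f t := by rw [← map_add, ← map_add, ← hqt]
  linarith [hfQ q hq]

theorem convexHull_range_subset_add_closedBall {ι : Type*} {v w : ι → E} {b : ℝ}
    (h : ∀ i, ‖v i - w i‖ ≤ b) :
    convexHull ℝ (range v) ⊆ convexHull ℝ (range w) + closedBall (0 : E) b :=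
  convexHull_min
    (range_subset_iff.2 fun i =>
      ⟨w i, subset_convexHull ℝ _ ⟨i, rfl⟩, v i - w i, by simpa using h i,
        add_sub_cancel _ _⟩)
    ((convex_convexHull ℝ _).add (convex_closedBall (0 : E) b))

theorem closedBall_subset_of_le_infDist_frontier [FiniteDimensional ℝ E] {s : Set E}
    (hs : IsClosed s) {x : E} (hx : x ∈ s) {r : ℝ} (hr : r ≤ infDist x (frontier s)) :
    closedBall x r ⊆ s := by
  rcases eq_or_ne s univ with rfl | hs_univ
  · exact subset_univ _
  obtain ⟨y, hy, hxy⟩ := exists_mem_frontier_infDist_compl_eq_dist hx hs_univ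
  calc closedBall x r
      ⊆ closedBall x (infDist x sᶜ) :=
        closedBall_subset_closedBall (hxy ▸ hr.trans (infDist_le_dist_of_mem hy))
    _ ⊆ closure s := closedBall_infDist_compl_subset_closure hx
    _ = s := hs.closure_eq

end NormedSpace

theorem stmt7 (E : Type*) [NormedAddCommGroup E] [InnerProductSpace ℝ E]
    [FiniteDimensional ℝ E] (k : ℕ) (v w : Fin k → E) (b : ℝ) (hb : 0 ≤ b)
    (h : ∀ i, ‖v i - w i‖ ≤ b) :
    {x ∈ convexHull ℝ (Set.range v) |
        b ≤ Metric.infDist x (frontier (convexHull ℝ (Set.range v)))} ⊆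
      convexHull ℝ (Set.range w) := by
  rintro x ⟨hxP, hxb⟩
  have hP : IsClosed (convexHull ℝ (range v)) := (finite_range v).isClosed_convexHull (𝕜 := ℝ)
  have hQ : IsClosed (convexHull ℝ (range w)) := (finite_range w).isClosed_convexHull (𝕜 := ℝ)
  refine mem_of_closedBall_subset_add_closedBall (convex_convexHull ℝ _) hQ hb ?_
  exact (closedBall_subset_of_le_infDist_frontier hP hxP hxb).trans
    (convexHull_range_subset_add_closedBall h)
end

section
/- Let A be an m×m irreducible nonnegative integer matrix with spectral radius λ, and let n ≥ 1 be a natural number. Then there exists an (nm)×(nm) irreducible nonnegative integer matrix B whose spectral radius r satisfies r ≥ 0 and r^n = λ; that is, the spectral radius of B is the positive real n-th root of λ. -/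
/-- All entries of the matrix are nonnegative. -/
def MatNonneg {n : ℕ} (A : Matrix (Fin n) (Fin n) ℤ) : Prop := ∀ i j, 0 ≤ A i j

/-- Irreducibility of a nonnegative square matrix. -/
def MatIrreducible {n : ℕ} (A : Matrix (Fin n) (Fin n) ℤ) : Prop :=
  ∀ i j, ∃ k : ℕ, 1 ≤ k ∧ 0 < (A ^ k) i j

/-- The spectral radius of an integer matrix: the maximal absolute value of its
complex eigenvalues (roots of the characteristic polynomial over `ℂ`). -/
noncomputable def specRad {n : ℕ} (A : Matrix (Fin n) (Fin n) ℤ) : ℝ :=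
  sSup {t : ℝ | ∃ μ : ℂ, (A.map fun a => (a : ℂ)).charpoly.IsRoot μ ∧ t = ‖μ‖}

/-!
Take for `B` the `n`-cyclic block matrix with identity blocks on the superdiagonal and `A` in
the corner that closes the cycle. A walk in the graph of `B` climbs one level per step and
applies `A` each time it wraps around, so the entries of `B ^ k` are entries of powers of `A`;
this gives irreducibility. An eigenvector of `B` for `μ` has blocks `w, μ w, …, μ ^ (n - 1) w`,
and closing the cycle says exactly `A w = μ ^ n w`. Hence the eigenvalues of `B` are exactly the
`n`-th roots of those of `A`.
-/
open Matrix Polynomial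

namespace ZMod

variable {n : ℕ} [NeZero n]

theorem natCast_val_add (p : ZMod n) (k : ℕ) : ((p.val + k : ℕ) : ZMod n) = p + k := by
  push_cast [natCast_zmod_val]
  rfl

theorem val_add_one_of_ne_zero {p : ZMod n} (hp : p + 1 ≠ 0) : (p + 1).val = p.val + 1 := by
  have hlt : p.val + 1 < n := by
    refine lt_of_le_of_ne p.val_lt fun h => hp ?_
    rw [← Nat.cast_one, ← natCast_val_add, h, natCast_self]
  rw [← Nat.cast_one, ← natCast_val_add, val_natCast, Nat.mod_eq_of_lt hlt]

theorem val_add_one_of_eq_zero {p : ZMod n} (hp : p + 1 = 0) : p.val + 1 = n := by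
  have hdvd : n ∣ p.val + 1 := by
    rw [← natCast_eq_zero_iff, natCast_val_add, Nat.cast_one, hp]
  exact le_antisymm p.val_lt (Nat.le_of_dvd p.val.succ_pos hdvd)

end ZMod

theorem Matrix.isRoot_charpoly_iff_exists_mulVec_eq_smul {ι K : Type*} [Fintype ι]
    [DecidableEq ι] [Field K] (A : Matrix ι ι K) (μ : K) :
    A.charpoly.IsRoot μ ↔ ∃ v ≠ 0, A *ᵥ v = μ • v := by
  rw [← charpoly_toLin', ← Module.End.hasEigenvalue_iff_isRoot_charpoly,
    Module.End.hasEigenvalue_iff]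
  simp [Module.End.eigenspace_def, Submodule.ne_bot_iff, sub_eq_zero, and_comm]

section CyclicLift

variable {ι R : Type*} [DecidableEq ι]

/-- The index `(i, p)` stands for coordinate `i` of the block at level `p : ZMod n`; level `p`
maps to level `p + 1` by the identity, except from level `-1` to level `0`, which goes by `A`. -/
def cyclicLift (n : ℕ) [Zero R] [One R] (A : Matrix ι ι R) :
    Matrix (ι × ZMod n) (ι × ZMod n) R :=
  of fun x y =>
    if y.2 = x.2 + 1 then (if y.2 = 0 then A x.1 y.1 else (1 : Matrix ι ι R) x.1 y.1) else 0

theorem cyclicLift_map {S : Type*} {n : ℕ} [Zero R] [One R] [Zero S] [One S]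
    (A : Matrix ι ι R) {f : R → S} (hf₀ : f 0 = 0) (hf₁ : f 1 = 1) :
    (cyclicLift n A).map f = cyclicLift n (A.map f) := by
  ext x y
  simp only [cyclicLift, map_apply, of_apply, one_apply]
  split_ifs <;> simp [hf₀, hf₁]

theorem cyclicLift_nonneg {n : ℕ} [Zero R] [One R] [Preorder R] [ZeroLEOneClass R]
    {A : Matrix ι ι R} (hA : ∀ i j, 0 ≤ A i j) (x y : ι × ZMod n) :
    0 ≤ cyclicLift n A x y := by
  simp only [cyclicLift, of_apply, one_apply]
  split_ifs <;> simp [hA]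

variable [Fintype ι] {n : ℕ} [NeZero n]

theorem cyclicLift_mulVec_apply [Semiring R] (A : Matrix ι ι R) (v : ι × ZMod n → R) (i : ι)
    (p : ZMod n) :
    (cyclicLift n A *ᵥ v) (i, p) =
      ((if p + 1 = 0 then A else 1) *ᵥ fun j => v (j, p + 1)) i := by
  simp only [mulVec, dotProduct, Fintype.sum_prod_type, cyclicLift, of_apply, ite_mul, zero_mul,
    Finset.sum_ite_eq', Finset.mem_univ, if_true]
  split_ifs <;> rfl

theorem cyclicLift_pow_apply [Semiring R] (A : Matrix ι ι R) (k : ℕ) (i j : ι) (p q : ZMod n) :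
    (cyclicLift n A ^ k) (i, p) (j, q) =
      if q = p + k then (A ^ ((p.val + k) / n)) i j else 0 := by
  induction k generalizing j q with
  | zero =>
    rw [pow_zero, Nat.add_zero, Nat.div_eq_of_lt p.val_lt, pow_zero, Nat.cast_zero, add_zero]
    rcases eq_or_ne q p with rfl | hqp
    · simp [one_apply]
    · simp [one_apply, hqp, hqp.symm]
  | succ k ih =>
    have hdiv : (p.val + k + 1) / n = (p.val + k) / n + if p + k + 1 = 0 then 1 else 0 := by
      have hdvd : n ∣ p.val + k + 1 ↔ p + k + 1 = 0 := by
        rw [← ZMod.natCast_eq_zero_iff, Nat.cast_add_one, ZMod.natCast_val_add]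
      simp only [Nat.succ_div, hdvd]
    rw [← add_assoc, pow_succ, mul_apply, Fintype.sum_prod_type]
    simp only [ih, ite_mul, zero_mul, Finset.sum_ite_eq', Finset.mem_univ, if_true]
    simp only [cyclicLift, of_apply, mul_ite, mul_zero, Nat.cast_succ, ← add_assoc]
    rcases eq_or_ne q (p + k + 1) with rfl | hq
    · by_cases hz : p + k + 1 = 0
      · simp [hdiv, hz, pow_succ, mul_apply]
      · simp [hdiv, hz, one_apply]
    · simp [hq]

theorem cyclicLift_exists_pow_pos [Semiring R] [LT R] {A : Matrix ι ι R}
    (hA : ∀ i j, ∃ s, 1 ≤ s ∧ 0 < (A ^ s) i j) (x y : ι × ZMod n) :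
    ∃ k, 1 ≤ k ∧ 0 < (cyclicLift n A ^ k) x y := by
  obtain ⟨i, p⟩ := x
  obtain ⟨j, q⟩ := y
  obtain ⟨s, hs, hpos⟩ := hA i j
  -- a walk of length `s * n + q - p` from level `p` to level `q` wraps around exactly `s` times
  set k := s * n + q.val - p.val
  have hsn : n ≤ s * n := Nat.le_mul_of_pos_left n hs
  have hpk : p.val + k = s * n + q.val := by have := p.val_lt; omega
  have hq : q = p + k := by simp [← ZMod.natCast_val_add, hpk]
  refine ⟨k, by have := p.val_lt; omega, ?_⟩
  rw [cyclicLift_pow_apply, if_pos hq, hpk, Nat.mul_comm, Nat.mul_add_div (NeZero.pos n),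
    Nat.div_eq_of_lt q.val_lt, Nat.add_zero]
  exact hpos

theorem cyclicLift_isRoot_charpoly_iff {K : Type*} [Field K] (A : Matrix ι ι K) (μ : K) :
    (cyclicLift n A).charpoly.IsRoot μ ↔ A.charpoly.IsRoot (μ ^ n) := by
  simp only [isRoot_charpoly_iff_exists_mulVec_eq_smul]
  constructor
  · rintro ⟨v, hv0, hv⟩
    have hlevel_succ (p : ZMod n) (hp : p + 1 ≠ 0) :
        (fun j => v (j, p + 1)) = μ • fun j => v (j, p) :=
      funext fun i => by simpa [cyclicLift_mulVec_apply, hp] using congrFun hv (i, p)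
    have hlevel (t : ℕ) (ht : t < n) :
        (fun j => v (j, (t : ZMod n))) = μ ^ t • fun j => v (j, 0) := by
      induction t with
      | zero => simp
      | succ t ih =>
        have hne : (t : ZMod n) + 1 ≠ 0 := by
          rw [← Nat.cast_succ, Ne, ZMod.natCast_eq_zero_iff]
          exact Nat.not_dvd_of_pos_of_lt t.succ_pos ht
        rw [Nat.cast_succ, hlevel_succ _ hne, ih (by omega), smul_smul, pow_succ']
    refine ⟨fun j => v (j, 0), fun h0 => hv0 ?_, ?_⟩
    · ext ⟨j, p⟩
      simpa [h0, ZMod.natCast_zmod_val] using congrFun (hlevel p.val p.val_lt) j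
    · have hlast : ((n - 1 : ℕ) : ZMod n) + 1 = 0 := by
        rw [← Nat.cast_add_one, Nat.sub_add_cancel NeZero.one_le, ZMod.natCast_self]
      have hwrap : A *ᵥ (fun j => v (j, 0)) = μ • fun j => v (j, ((n - 1 : ℕ) : ZMod n)) :=
        funext fun i => by
          simpa [cyclicLift_mulVec_apply, hlast] using congrFun hv (i, ((n - 1 : ℕ) : ZMod n))
      rw [hwrap, hlevel _ (Nat.sub_lt (NeZero.pos n) one_pos), smul_smul, ← pow_succ',
        Nat.sub_add_cancel NeZero.one_le]
  · rintro ⟨u, hu0, hu⟩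
    refine ⟨fun x => μ ^ x.2.val * u x.1, fun h0 => hu0 (funext fun j => ?_), ?_⟩
    · simpa using congrFun h0 (j, 0)
    · ext ⟨i, p⟩
      rw [cyclicLift_mulVec_apply]
      by_cases hp : p + 1 = 0
      · simp only [hp, if_true, ZMod.val_zero, pow_zero, one_mul, Pi.smul_apply, smul_eq_mul]
        change (A *ᵥ u) i = _
        rw [congrFun hu i]
        conv_lhs => rw [Pi.smul_apply, smul_eq_mul, ← ZMod.val_add_one_of_eq_zero hp]
        rw [pow_succ', mul_assoc]
      · simp only [hp, if_false, one_mulVec, ZMod.val_add_one_of_ne_zero hp, pow_succ',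
          Pi.smul_apply, smul_eq_mul, mul_assoc]

end CyclicLift

theorem sSup_norm_image_pow_eq {S T : Set ℂ} (hS : S.Finite) (hT : T.Finite) {n : ℕ}
    (hn : n ≠ 0) (hTS : ∀ μ, μ ∈ T ↔ μ ^ n ∈ S) :
    sSup ((‖·‖) '' T) ^ n = sSup ((‖·‖) '' S) := by
  rcases S.eq_empty_or_nonempty with rfl | ⟨s, hs⟩
  · have hT : T = ∅ := Set.eq_empty_of_forall_notMem fun μ hμ => (hTS μ).1 hμ
    simp [hT, zero_pow hn]
  have hroot (s : ℂ) (hs : s ∈ S) : ∃ μ ∈ T, ‖s‖ = ‖μ‖ ^ n := by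
    obtain ⟨μ, rfl⟩ := IsAlgClosed.exists_pow_nat_eq s (Nat.pos_of_ne_zero hn)
    exact ⟨μ, (hTS μ).2 hs, norm_pow μ n⟩
  obtain ⟨μ, hμT, -⟩ := hroot s hs
  obtain ⟨μ₀, hμ₀T, hμ₀⟩ :=
    (Set.Nonempty.image (‖·‖) ⟨μ, hμT⟩).csSup_mem (hT.image _)
  apply le_antisymm
  · rw [← hμ₀, ← norm_pow]
    exact le_csSup (hS.image _).bddAbove ⟨_, (hTS μ₀).1 hμ₀T, rfl⟩
  · refine csSup_le ⟨_, s, hs, rfl⟩ ?_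
    rintro _ ⟨t, ht, rfl⟩
    obtain ⟨μ, hμT, hμ⟩ := hroot t ht
    change ‖t‖ ≤ _
    rw [hμ]
    exact pow_le_pow_left₀ (norm_nonneg μ) (le_csSup (hT.image _).bddAbove ⟨μ, hμT, rfl⟩) n

theorem specRad_eq_sSup {m : ℕ} (A : Matrix (Fin m) (Fin m) ℤ) :
    specRad A = sSup ((‖·‖) '' {μ | (A.map ((↑) : ℤ → ℂ)).charpoly.IsRoot μ}) := by
  simp only [specRad, Set.image, eq_comm]
  rfl

theorem stmt10 (m : ℕ) (A : Matrix (Fin m) (Fin m) ℤ)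
    (hA : MatNonneg A) (hirr : MatIrreducible A)
    (lam : ℝ) (hlam : specRad A = lam)
    (n : ℕ) (hn : 1 ≤ n) :
    ∃ B : Matrix (Fin (n * m)) (Fin (n * m)) ℤ,
      MatNonneg B ∧ MatIrreducible B ∧ 0 ≤ specRad B ∧ (specRad B) ^ n = lam := by
  have : NeZero n := ⟨by omega⟩
  let e : Fin m × ZMod n ≃ Fin (n * m) := Fintype.equivOfCardEq (by simp [ZMod.card, mul_comm])
  have hroots (μ : ℂ) :
      ((reindex e e (cyclicLift n A)).map ((↑) : ℤ → ℂ)).charpoly.IsRoot μ ↔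
        (A.map ((↑) : ℤ → ℂ)).charpoly.IsRoot (μ ^ n) := by
    rw [reindex_apply, ← submatrix_map, ← reindex_apply, charpoly_reindex,
      cyclicLift_map A Int.cast_zero Int.cast_one, cyclicLift_isRoot_charpoly_iff]
  refine ⟨reindex e e (cyclicLift n A), fun i j => cyclicLift_nonneg hA _ _, fun i j => ?_, ?_,
    ?_⟩
  · obtain ⟨k, hk, hpos⟩ := cyclicLift_exists_pow_pos hirr (e.symm i) (e.symm j)
    refine ⟨k, hk, ?_⟩
    rwa [← coe_reindexAlgEquiv ℤ ℤ, ← map_pow]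
  · rw [specRad_eq_sSup]
    exact Real.sSup_nonneg (by rintro _ ⟨μ, -, rfl⟩; exact norm_nonneg μ)
  · rw [← hlam, specRad_eq_sSup, specRad_eq_sSup]
    exact sSup_norm_image_pow_eq (finite_setOfPred_isRoot (charpoly_monic _).ne_zero)
      (finite_setOfPred_isRoot (charpoly_monic _).ne_zero) (by omega) hroots
end

section
/- Let λ be a Perron number of degree ≥ 2 with Galois conjugates λ_i ≠ λ and spectral ratio ρ = max_i |λ_i|/λ < 1. If λ ≥ 1 + 4/(1−ρ), then λ − 1 is a Perron number, its Galois conjugates other than itself are exactly the numbers λ_i − 1, and its spectral ratio μ = max_i |λ_i − 1|/(λ − 1) satisfies μ ≤ ρ + (1−ρ)/2 < 1, hence 1 − μ ≥ (1 − ρ)/2. -/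
open Polynomial

/-- A Perron number: a real algebraic integer `x ≥ 1` strictly larger in absolute
value than all of its other Galois conjugates. -/
def IsPerron (x : ℝ) : Prop :=
  IsIntegral ℤ x ∧ 1 ≤ x ∧
    ∀ z : ℂ, aeval z (minpoly ℚ x) = 0 → z ≠ (x : ℂ) → ‖z‖ < x

/-- The spectral ratio of a Perron number: `max_i |λ_i| / λ` over the Galois
conjugates `λ_i ≠ λ`. -/
noncomputable def spectralRatio (x : ℝ) : ℝ :=
  sSup {t : ℝ | ∃ z : ℂ, aeval z (minpoly ℚ x) = 0 ∧ z ≠ (x : ℂ) ∧ t = ‖z‖ / x}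

/-!
Shifting by `-1` translates every conjugate by `-1`, because the minimal polynomial of
`λ - 1` is that of `λ` composed with `X + 1`. A conjugate `w = z - 1` then has
`‖w‖ ≤ ‖z‖ + 1 ≤ ρλ + 1`, and the hypothesis, in the form `(1 - ρ)λ ≥ 5 - ρ`, gives
`ρλ + 1 ≤ (ρ + (1 - ρ)/2)(λ - 1)`.
-/

def conjugates (x : ℝ) : Set ℂ :=
  {z | aeval z (minpoly ℚ x) = 0 ∧ z ≠ (x : ℂ)}

theorem aeval_minpoly_sub_rat (x : ℝ) (r : ℚ) (z : ℂ) :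
    aeval z (minpoly ℚ (x - r)) = aeval (z + r) (minpoly ℚ x) := by
  simpa [aeval_comp] using congrArg (aeval z) (minpoly.sub_algebraMap x r)

theorem conjugates_sub_rat (x : ℝ) (r : ℚ) :
    conjugates (x - r) = (fun z : ℂ => z - r) '' conjugates x := by
  ext w
  simp only [conjugates, Set.mem_ofPred_eq, Set.mem_image, aeval_minpoly_sub_rat]
  constructor
  · rintro ⟨hroot, hne⟩
    refine ⟨w + r, ⟨hroot, fun h => hne ?_⟩, add_sub_cancel_right w _⟩
    push_cast
    rw [← h, add_sub_cancel_right]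
  · rintro ⟨z, ⟨hroot, hne⟩, rfl⟩
    refine ⟨by rwa [sub_add_cancel], fun h => hne ?_⟩
    push_cast at h
    exact sub_left_injective h

theorem conjugates_sub_one (x : ℝ) :
    conjugates (x - 1) = (fun z : ℂ => z - 1) '' conjugates x := by
  simpa using conjugates_sub_rat x 1

theorem spectralRatio_nonneg {x : ℝ} (hx : 0 ≤ x) : 0 ≤ spectralRatio x :=
  Real.sSup_nonneg fun _ ⟨z, _, _, ht⟩ => ht ▸ div_nonneg (norm_nonneg z) hx

theorem spectralRatio_le_of_norm_le {x c : ℝ} (hx : 0 < x) (hc : 0 ≤ c)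
    (h : ∀ z ∈ conjugates x, ‖z‖ ≤ c * x) : spectralRatio x ≤ c := by
  refine Real.sSup_le ?_ hc
  rintro t ⟨z, hroot, hne, rfl⟩
  exact (div_le_iff₀ hx).2 (h z ⟨hroot, hne⟩)

theorem isPerron_of_norm_le {x μ : ℝ} (hint : IsIntegral ℤ x) (hx : 1 ≤ x) (hμ : μ < 1)
    (h : ∀ z ∈ conjugates x, ‖z‖ ≤ μ * x) : IsPerron x :=
  ⟨hint, hx, fun z hroot hne => (h z ⟨hroot, hne⟩).trans_lt (by nlinarith)⟩

namespace IsPerron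

variable {x : ℝ} (hx : IsPerron x)
include hx

theorem norm_le_spectralRatio_mul {z : ℂ} (hz : z ∈ conjugates x) :
    ‖z‖ ≤ spectralRatio x * x := by
  have hbdd : BddAbove {t : ℝ | ∃ z : ℂ, aeval z (minpoly ℚ x) = 0 ∧ z ≠ (x : ℂ) ∧
      t = ‖z‖ / x} := by
    refine ⟨1, ?_⟩
    rintro t ⟨z, hroot, hne, rfl⟩
    exact div_le_one_of_le₀ (hx.2.2 z hroot hne).le (by linarith [hx.2.1])
  exact (div_le_iff₀ (by linarith [hx.2.1])).1 (le_csSup hbdd ⟨z, hz.1, hz.2, rfl⟩)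

theorem norm_le_of_mem_conjugates_sub_one {w : ℂ} (hw : w ∈ conjugates (x - 1)) :
    ‖w‖ ≤ spectralRatio x * x + 1 := by
  rw [conjugates_sub_one] at hw
  obtain ⟨z, hz, rfl⟩ := hw
  calc ‖z - 1‖ ≤ ‖z‖ + 1 := by simpa using norm_sub_le z 1
    _ ≤ spectralRatio x * x + 1 := by gcongr; exact hx.norm_le_spectralRatio_mul hz

end IsPerron

theorem mul_add_one_le_of_one_add_div_le {ρ x : ℝ} (hρ : ρ < 1) (hx : 1 + 4 / (1 - ρ) ≤ x) :
    ρ * x + 1 ≤ (ρ + (1 - ρ) / 2) * (x - 1) := by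
  have h1ρ : 0 < 1 - ρ := by linarith
  have h5 : 5 - ρ ≤ (1 - ρ) * x := by
    calc 5 - ρ = (1 - ρ) * (1 + 4 / (1 - ρ)) := by field_simp; ring
      _ ≤ (1 - ρ) * x := by gcongr
  nlinarith

theorem stmt12_general (lam : ℝ) (hP : IsPerron lam)
    (ρ : ℝ) (hρ : ρ = spectralRatio lam) (hρ1 : ρ < 1)
    (hlam : 1 + 4 / (1 - ρ) ≤ lam) :
    IsPerron (lam - 1) ∧
    {z : ℂ | aeval z (minpoly ℚ (lam - 1)) = 0 ∧ z ≠ ((lam - 1 : ℝ) : ℂ)} =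
      (fun z => z - 1) '' {z : ℂ | aeval z (minpoly ℚ lam) = 0 ∧ z ≠ (lam : ℂ)} ∧
    spectralRatio (lam - 1) ≤ ρ + (1 - ρ) / 2 ∧
    ρ + (1 - ρ) / 2 < 1 ∧
    (1 - ρ) / 2 ≤ 1 - spectralRatio (lam - 1) := by
  have hρ0 : 0 ≤ ρ := hρ ▸ spectralRatio_nonneg (by linarith [hP.2.1])
  have hlam2 : 2 ≤ lam := by
    have : 4 ≤ 4 / (1 - ρ) := (le_div_iff₀ (by linarith)).2 (by nlinarith)
    linarith
  have hbound : ∀ w ∈ conjugates (lam - 1), ‖w‖ ≤ (ρ + (1 - ρ) / 2) * (lam - 1) :=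
    fun w hw => (hρ ▸ hP.norm_le_of_mem_conjugates_sub_one hw).trans
      (mul_add_one_le_of_one_add_div_le hρ1 hlam)
  have hμ : spectralRatio (lam - 1) ≤ ρ + (1 - ρ) / 2 :=
    spectralRatio_le_of_norm_le (by linarith) (by linarith) hbound
  refine ⟨isPerron_of_norm_le (hP.1.sub isIntegral_one) (by linarith) (by linarith) hbound,
    ?_, hμ, by linarith, by linarith⟩
  exact conjugates_sub_one lam

theorem stmt12 (lam : ℝ) (hP : IsPerron lam)
    (hdeg : 2 ≤ (minpoly ℚ lam).natDegree)
    (ρ : ℝ) (hρ : ρ = spectralRatio lam) (hρ1 : ρ < 1)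
    (hlam : 1 + 4 / (1 - ρ) ≤ lam) :
    IsPerron (lam - 1) ∧
    {z : ℂ | aeval z (minpoly ℚ (lam - 1)) = 0 ∧ z ≠ ((lam - 1 : ℝ) : ℂ)} =
      (fun z => z - 1) '' {z : ℂ | aeval z (minpoly ℚ lam) = 0 ∧ z ≠ (lam : ℂ)} ∧
    spectralRatio (lam - 1) ≤ ρ + (1 - ρ) / 2 ∧
    ρ + (1 - ρ) / 2 < 1 ∧
    (1 - ρ) / 2 ≤ 1 - spectralRatio (lam - 1) :=
  stmt12_general lam hP ρ hρ hρ1 hlam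
end
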